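/- Let p be a positive rational with √p irrational, and let x₁ = a₁ + b₁√p, …, xₙ = aₙ + bₙ√p (n ≥ 2) with all aᵢ, bᵢ ∈ ℚ, all xᵢ > 0, and such that xᵢ/xⱼ ∉ ℚ and xᵢ·xⱼ ∉ ℚ whenever i ≠ j. Suppose aᵢ − bᵢ√p > 0 for all i. If a rectangle of aspect ratio z > 0 admits a diverse tiling by rectangles with aspect ratios x₁, …, xₙ, then z = e + f√p for some rationals e, f with e > 0 and |f|/e < max_{1 ≤ i ≤ n} |bᵢ|/aᵢ. -/

import Mathlib

/-!
Dehn's argument: for every biadditive `B` on `ℝ`, a tiling of `[0,1] × [0,z]` satisfies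
`∑ₖ B wₖ hₖ = B 1 z`, because refining the tiling to the grid of all tile coordinates turns both
sides into the same sum over grid cells.

With `B u v = φ u * φ v` for a `ℚ(√p)`-linear `φ : ℝ → ℚ(√p)` with `φ 1 = 1`, every tile
contributes `(h / w) (φ w)² ≥ 0`; if `z ∉ ℚ(√p)` one may take `φ z = -1`, so `z ∈ ℚ(√p)`.

For `z = e + f√p`, write `φ` in coordinates `G : ℝ → ℚ²` and take `B u v = Q_μ (G u) (G v)` with
`Q_μ (v, v') = v₁v₁' + μ(v₁v₂' + v₂v₁') + (2μ² - p)v₂v₂'`. On a tile of ratio `a + b√p` this is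
`(a + μb)(G₁ + μG₂)² + (μ² - p)(a - μb)G₂²`, while `B 1 z = e + μf`. For `μ = ±1/M` with
`M = maxᵢ |bᵢ|/aᵢ` every tile contributes `≥ 0`. The irrationality hypotheses make the maximum
attained only once, so by diversity some tile has a ratio with `|bⱼ|/aⱼ < M`, and choosing `φ`
nonzero on its side makes its contribution `> 0`. Hence `e ± f/M > 0`.
-/

/-- A tiling of the rectangle `[0,1] × [0,r]` by finitely many closed
axis-parallel rectangles with positive side lengths, covering the rectangle
and having pairwise disjoint interiors. -/
structure RectTiling (r : ℝ) where
  m : ℕ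
  px : Fin m → ℝ
  py : Fin m → ℝ
  w : Fin m → ℝ
  h : Fin m → ℝ
  w_pos : ∀ k, 0 < w k
  h_pos : ∀ k, 0 < h k
  cover : (Set.Icc (0:ℝ) 1 ×ˢ Set.Icc (0:ℝ) r) =
      ⋃ k, Set.Icc (px k) (px k + w k) ×ˢ Set.Icc (py k) (py k + h k)
  disj : ∀ k l, k ≠ l →
      Disjoint ((Set.Ioo (px k) (px k + w k)) ×ˢ (Set.Ioo (py k) (py k + h k)))
               ((Set.Ioo (px l) (px l + w l)) ×ˢ (Set.Ioo (py l) (py l + h l)))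

/-- Tile `k` of the tiling `T` has aspect ratio `x` (in one of the two orientations). -/
def RectTiling.ratioOK {r : ℝ} (T : RectTiling r) (k : Fin T.m) (x : ℝ) : Prop :=
  T.h k / T.w k = x ∨ T.w k / T.h k = x

/-- The rectangle of aspect ratio `r` is tileable by rectangles with aspect
ratios among `X`. -/
def Tileable (r : ℝ) {n : ℕ} (X : Fin n → ℝ) : Prop :=
  ∃ T : RectTiling r, ∀ k, ∃ i, T.ratioOK k (X i)

/-- The rectangle of aspect ratio `r` admits a *diverse* tiling by rectangles
with aspect ratios `X 0, …, X (n-1)`: every tile has some ratio `X i`, and for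
every `i` some tile has ratio `X i`. -/
def DiverselyTileable (r : ℝ) {n : ℕ} (X : Fin n → ℝ) : Prop :=
  ∃ T : RectTiling r, (∀ k, ∃ i, T.ratioOK k (X i)) ∧ (∀ i, ∃ k, T.ratioOK k (X i))

open Finset

theorem Finset.exists_strictMonoOn_image_eq {α : Type*} [LinearOrder α] [Nonempty α]
    (S : Finset α) : ∃ (N : ℕ) (ξ : ℕ → α), StrictMonoOn ξ (Set.Iio N) ∧ ξ '' Set.Iio N = S := by
  classical
  let e := S.orderEmbOfFin rfl
  refine ⟨#S, fun i => if h : i < #S then e ⟨i, h⟩ else Classical.arbitrary α, ?_, ?_⟩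
  · intro i (hi : i < #S) j (hj : j < #S) hij
    simpa only [dif_pos hi, dif_pos hj] using
      e.strictMono (show (⟨i, hi⟩ : Fin #S) < ⟨j, hj⟩ from hij)
  · rw [← S.range_orderEmbOfFin rfl]
    ext x
    constructor
    · rintro ⟨i, hi : i < #S, rfl⟩
      exact ⟨⟨i, hi⟩, by simp [e, hi]⟩
    · rintro ⟨i, rfl⟩
      exact ⟨i, i.2, by simp [e]⟩

namespace StrictMonoOn

variable {α : Type*} {ξ : ℕ → α} {N : ℕ}

theorem le_or_le_of_mem_image [LinearOrder α] (hξ : StrictMonoOn ξ (Set.Iio N)) {u : α}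
    (hu : u ∈ ξ '' Set.Iio N) {i : ℕ} (hi : i + 1 < N) : u ≤ ξ i ∨ ξ (i + 1) ≤ u := by
  obtain ⟨m, hm, rfl⟩ := hu
  rcases le_or_gt m i with h | h
  · exact Or.inl (hξ.monotoneOn hm (show i < N by omega) h)
  · exact Or.inr (hξ.monotoneOn (show i + 1 < N from hi) hm h)

theorem sum_filter_sub [LinearOrder α] [AddCommGroup α] (hξ : StrictMonoOn ξ (Set.Iio N))
    {u v : α} (hu : u ∈ ξ '' Set.Iio N) (hv : v ∈ ξ '' Set.Iio N) (huv : u ≤ v) :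
    ∑ i ∈ range (N - 1) with u ≤ ξ i ∧ ξ (i + 1) ≤ v, (ξ (i + 1) - ξ i) = v - u := by
  obtain ⟨m, hm : m < N, rfl⟩ := hu
  obtain ⟨m', hm' : m' < N, rfl⟩ := hv
  have hcells : {i ∈ range (N - 1) | ξ m ≤ ξ i ∧ ξ (i + 1) ≤ ξ m'} = Ico m m' := by
    ext i
    simp only [mem_filter, mem_range, mem_Ico]
    constructor
    · rintro ⟨hi, hmi, hi'⟩
      exact ⟨(hξ.le_iff_le hm (show i < N by omega)).1 hmi,
        (hξ.le_iff_le (show i + 1 < N by omega) hm').1 hi'⟩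
    · rintro ⟨hmi, hi'⟩
      exact ⟨by omega, (hξ.le_iff_le hm (show i < N by omega)).2 hmi,
        (hξ.le_iff_le (show i + 1 < N by omega) hm').2 hi'⟩
  rw [hcells, sum_Ico_sub ξ ((hξ.le_iff_le hm hm').1 huv)]

end StrictMonoOn

theorem exists_subdivision {ι : Type*} [Fintype ι] {L : ℝ} (hL : 0 ≤ L) (u ℓ : ι → ℝ)
    (hℓ : ∀ k, 0 ≤ ℓ k) (hsub : ∀ k, Set.Icc (u k) (u k + ℓ k) ⊆ Set.Icc 0 L) :
    ∃ (N : ℕ) (ξ : ℕ → ℝ), (∀ i < N, ξ i < ξ (i + 1)) ∧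
      ∑ i ∈ range N, (ξ (i + 1) - ξ i) = L ∧
      (∀ k, ∑ i ∈ range N with u k ≤ ξ i ∧ ξ (i + 1) ≤ u k + ℓ k, (ξ (i + 1) - ξ i) = ℓ k) ∧
      ∀ i < N, ∀ t ∈ Set.Ioo (ξ i) (ξ (i + 1)), t ∈ Set.Icc 0 L ∧
        ∀ k, t ∈ Set.Icc (u k) (u k + ℓ k) → u k ≤ ξ i ∧ ξ (i + 1) ≤ u k + ℓ k := by
  classical
  obtain ⟨N, ξ, hξ, hS⟩ := (insert 0 (insert L
    (univ.image u ∪ univ.image fun k => u k + ℓ k))).exists_strictMonoOn_image_eq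
  have hu k : u k ∈ ξ '' Set.Iio N := by simp [hS]
  have huℓ k : u k + ℓ k ∈ ξ '' Set.Iio N := by simp [hS]
  have h0 : 0 ∈ ξ '' Set.Iio N := by simp [hS]
  have hL' : L ∈ ξ '' Set.Iio N := by simp [hS]
  have hξL i (hi : i < N) : ξ i ∈ Set.Icc 0 L := by
    have : ξ i ∈ ξ '' Set.Iio N := ⟨i, hi, rfl⟩
    simp only [hS, coe_insert, coe_union, coe_image, coe_univ, Set.image_univ,
      Set.mem_insert_iff, Set.mem_union, Set.mem_range] at this
    rcases this with h | h | ⟨k, h⟩ | ⟨k, h⟩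
    · rw [h]; exact ⟨le_rfl, hL⟩
    · rw [h]; exact ⟨hL, le_rfl⟩
    · exact h ▸ hsub k (Set.left_mem_Icc.2 (by linarith [hℓ k]))
    · exact h ▸ hsub k (Set.right_mem_Icc.2 (by linarith [hℓ k]))
  refine ⟨N - 1, ξ, fun i hi => hξ (show i < N by omega) (show i + 1 < N by omega) (by omega),
    ?_, fun k => by simpa using hξ.sum_filter_sub (hu k) (huℓ k) (by linarith [hℓ k]), ?_⟩
  · rw [← sub_zero L, ← hξ.sum_filter_sub h0 hL' hL, filter_true_of_mem]
    intro i hi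
    rw [mem_range] at hi
    exact ⟨(hξL i (by omega)).1, (hξL (i + 1) (by omega)).2⟩
  · intro i hi t ht
    refine ⟨⟨(hξL i (by omega)).1.trans ht.1.le, ht.2.le.trans (hξL (i + 1) (by omega)).2⟩,
      fun k hk => ⟨?_, ?_⟩⟩
    · exact (hξ.le_or_le_of_mem_image (hu k) (by omega)).resolve_right
        fun h => (h.trans hk.1).not_gt ht.2
    · exact (hξ.le_or_le_of_mem_image (huℓ k) (by omega)).resolve_left
        fun h => (hk.2.trans h).not_gt ht.1

theorem Finset.sum_sum_eq_of_existsUnique {ι α M : Type*} [Fintype ι] [DecidableEq α]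
    [AddCommMonoid M] {s : Finset α} {t : ι → Finset α} (ht : ∀ k, t k ⊆ s)
    (h : ∀ x ∈ s, ∃! k, x ∈ t k) (f : α → M) : ∑ k, ∑ x ∈ t k, f x = ∑ x ∈ s, f x := by
  rw [← sum_biUnion]
  · congr 1
    ext x
    simp only [mem_biUnion, mem_univ, true_and]
    exact ⟨fun ⟨k, hk⟩ => ht k hk, fun hx => (h x hx).exists⟩
  · intro k _ l _ hkl
    refine disjoint_left.2 fun x hxk hxl => hkl ?_
    exact (h x (ht k hxk)).unique hxk hxl

theorem Finset.exists_sup'_eq_and_lt {ι α : Type*} [LinearOrder α] {s : Finset ι}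
    (hs : s.Nonempty) (g : ι → α) (hg : Function.Injective g) :
    ∃ i₀, s.sup' hs g = g i₀ ∧ ∀ i ∈ s, i ≠ i₀ → g i < s.sup' hs g := by
  obtain ⟨i₀, -, h⟩ := exists_mem_eq_sup' hs g
  exact ⟨i₀, h, fun i hi hne => (le_sup' g hi).lt_of_ne (h ▸ hg.ne hne)⟩

theorem Module.exists_dual_eq_one_and_eq {K V : Type*} [Field K] [AddCommGroup V] [Module K V]
    {u v : V} (hu : u ≠ 0) (hv : v ∉ K ∙ u) (c : K) :
    ∃ φ : Module.Dual K V, φ u = 1 ∧ φ v = c := by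
  obtain ⟨f, hf⟩ := Module.Projective.exists_dual_eq_one K hu
  obtain ⟨φ, hφu, hφv⟩ := LinearMap.exists_extend_of_notMem (f ∘ₗ (K ∙ u).subtype) hv c
  refine ⟨φ, ?_, hφv⟩
  simpa [hf] using LinearMap.congr_fun hφu ⟨u, Submodule.mem_span_singleton_self u⟩

theorem Module.exists_dual_eq_one_and_ne_zero {K V : Type*} [Field K] [AddCommGroup V]
    [Module K V] {u v : V} (hu : u ≠ 0) (hv : v ≠ 0) :
    ∃ φ : Module.Dual K V, φ u = 1 ∧ φ v ≠ 0 := by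
  by_cases hvu : v ∈ K ∙ u
  · obtain ⟨c, rfl⟩ := Submodule.mem_span_singleton.1 hvu
    obtain ⟨φ, hφ⟩ := Module.Projective.exists_dual_eq_one K hu
    exact ⟨φ, hφ, by simpa [hφ] using (smul_ne_zero_iff.1 hv).1⟩
  · obtain ⟨φ, hφu, hφv⟩ := exists_dual_eq_one_and_eq hu hvu 1
    exact ⟨φ, hφu, hφv ▸ one_ne_zero⟩

theorem Subfield.mem_span_one_iff {L : Type*} [Field L] (K : Subfield L) {x : L} :
    x ∈ K ∙ (1 : L) ↔ x ∈ K := by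
  rw [Submodule.mem_span_singleton]
  exact ⟨fun ⟨c, hc⟩ => hc ▸ (show (c : L) * 1 ∈ K by simp),
    fun hx => ⟨⟨x, hx⟩, mul_one x⟩⟩

namespace RectTiling

variable {r : ℝ} (T : RectTiling r)

def tile (k : Fin T.m) : Set (ℝ × ℝ) :=
  Set.Icc (T.px k) (T.px k + T.w k) ×ˢ Set.Icc (T.py k) (T.py k + T.h k)

def tileInterior (k : Fin T.m) : Set (ℝ × ℝ) :=
  Set.Ioo (T.px k) (T.px k + T.w k) ×ˢ Set.Ioo (T.py k) (T.py k + T.h k)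

theorem tile_subset (k : Fin T.m) : T.tile k ⊆ Set.Icc 0 1 ×ˢ Set.Icc 0 r :=
  T.cover ▸ Set.subset_iUnion T.tile k

theorem Icc_px_subset (k : Fin T.m) : Set.Icc (T.px k) (T.px k + T.w k) ⊆ Set.Icc 0 1 :=
  fun _ hs => (T.tile_subset k (Set.mk_mem_prod (b := T.py k) hs
    (Set.left_mem_Icc.2 (le_add_of_nonneg_right (T.h_pos k).le)))).1

theorem Icc_py_subset (k : Fin T.m) : Set.Icc (T.py k) (T.py k + T.h k) ⊆ Set.Icc 0 r :=
  fun _ ht => (T.tile_subset k (Set.mk_mem_prod (a := T.px k)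
    (Set.left_mem_Icc.2 (le_add_of_nonneg_right (T.w_pos k).le)) ht)).2

theorem existsUnique_mem_tile {q : ℝ × ℝ} (hq : q ∈ Set.Icc 0 1 ×ˢ Set.Icc 0 r)
    (hint : ∀ k, q ∈ T.tile k → q ∈ T.tileInterior k) : ∃! k, q ∈ T.tile k := by
  obtain ⟨k, hk⟩ := Set.mem_iUnion.1 (T.cover ▸ hq)
  refine ⟨k, hk, fun l hl => ?_⟩
  by_contra hlk
  exact Set.disjoint_left.1 (T.disj l k hlk) (hint l hl) (hint k hk)

theorem sum_bilinear_eq {R M : Type*} [CommSemiring R] [Module R ℝ] [AddCommGroup M]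
    [Module R M] (hr : 0 ≤ r) (B : ℝ →ₗ[R] ℝ →ₗ[R] M) :
    ∑ k, B (T.w k) (T.h k) = B 1 r := by
  classical
  obtain ⟨N, ξ, hξ, hξ1, hξw, hξcell⟩ :=
    exists_subdivision zero_le_one T.px T.w (fun k => (T.w_pos k).le) T.Icc_px_subset
  obtain ⟨N', η, hη, hηr, hηh, hηcell⟩ :=
    exists_subdivision hr T.py T.h (fun k => (T.h_pos k).le) T.Icc_py_subset
  set col : Fin T.m → Finset ℕ :=
    fun k => {i ∈ range N | T.px k ≤ ξ i ∧ ξ (i + 1) ≤ T.px k + T.w k}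
  set row : Fin T.m → Finset ℕ :=
    fun k => {j ∈ range N' | T.py k ≤ η j ∧ η (j + 1) ≤ T.py k + T.h k}
  have hcell : ∀ c ∈ range N ×ˢ range N', ∃! k, c ∈ col k ×ˢ row k := by
    rintro ⟨i, j⟩ hc
    obtain ⟨hi, hj⟩ : i < N ∧ j < N' := by simpa using hc
    -- a point `(s, t)` inside cell `(i, j)` lies in tile `k` iff the whole cell does
    obtain ⟨s, hs⟩ := Set.nonempty_Ioo.2 (hξ i hi)
    obtain ⟨t, ht⟩ := Set.nonempty_Ioo.2 (hη j hj)
    have hcol k : s ∈ Set.Icc (T.px k) (T.px k + T.w k) ↔ i ∈ col k := by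
      simp only [col, mem_filter, mem_range, hi, true_and]
      exact ⟨(hξcell i hi s hs).2 k, fun h => ⟨h.1.trans hs.1.le, hs.2.le.trans h.2⟩⟩
    have hrow k : t ∈ Set.Icc (T.py k) (T.py k + T.h k) ↔ j ∈ row k := by
      simp only [row, mem_filter, mem_range, hj, true_and]
      exact ⟨(hηcell j hj t ht).2 k, fun h => ⟨h.1.trans ht.1.le, ht.2.le.trans h.2⟩⟩
    have hint k (hk : (s, t) ∈ T.tile k) : (s, t) ∈ T.tileInterior k := by
      obtain ⟨h₁, h₂⟩ := (hξcell i hi s hs).2 k hk.1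
      obtain ⟨h₃, h₄⟩ := (hηcell j hj t ht).2 k hk.2
      exact ⟨⟨h₁.trans_lt hs.1, hs.2.trans_le h₂⟩, ⟨h₃.trans_lt ht.1, ht.2.trans_le h₄⟩⟩
    simpa only [tile, Set.mem_prod, hcol, hrow, mem_product] using
      T.existsUnique_mem_tile ⟨(hξcell i hi s hs).1, (hηcell j hj t ht).1⟩ hint
  calc ∑ k, B (T.w k) (T.h k)
      = ∑ k, ∑ c ∈ col k ×ˢ row k, B (ξ (c.1 + 1) - ξ c.1) (η (c.2 + 1) - η c.2) := by
        refine sum_congr rfl fun k _ => ?_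
        rw [← hξw k, ← hηh k, sum_product, sum_comm]
        simp only [map_sum, LinearMap.coe_sum, Finset.sum_apply]
        rfl
    _ = ∑ c ∈ range N ×ˢ range N', B (ξ (c.1 + 1) - ξ c.1) (η (c.2 + 1) - η c.2) :=
        sum_sum_eq_of_existsUnique (fun k => product_subset_product (filter_subset _ _)
          (filter_subset _ _)) hcell _
    _ = B (∑ i ∈ range N, (ξ (i + 1) - ξ i)) (∑ j ∈ range N', (η (j + 1) - η j)) := by
        rw [sum_product, sum_comm]
        simp only [map_sum, LinearMap.coe_sum, Finset.sum_apply]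
    _ = B 1 r := by rw [hξ1, hηr]

theorem ratioOK.exists_apply_eq {T : RectTiling r} {α : Type*} {k : Fin T.m} {x : ℝ}
    (hk : T.ratioOK k x) :
    ∃ u ≠ 0, ∀ B : ℝ → ℝ → α, (∀ s t, B s t = B t s) → B (T.w k) (T.h k) = B u (x * u) := by
  rcases hk with hx | hx
  · refine ⟨T.w k, (T.w_pos k).ne', fun B _ => ?_⟩
    rw [← hx, div_mul_cancel₀ _ (T.w_pos k).ne']
  · refine ⟨T.h k, (T.h_pos k).ne', fun B hB => ?_⟩
    rw [← hx, div_mul_cancel₀ _ (T.h_pos k).ne', hB]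

theorem ratioOK.div_mem {T : RectTiling r} {K : Subfield ℝ} {k : Fin T.m} {x : ℝ}
    (hk : T.ratioOK k x) (hx : x ∈ K) : T.h k / T.w k ∈ K := by
  rcases hk with rfl | rfl
  · exact hx
  · simpa using K.inv_mem hx

theorem mem_of_div_mem (hr : 0 ≤ r) (K : Subfield ℝ) (hK : ∀ k, T.h k / T.w k ∈ K) :
    r ∈ K := by
  by_contra hrK
  obtain ⟨φ, hφ1, hφr⟩ := Module.exists_dual_eq_one_and_eq one_ne_zero
    (mt K.mem_span_one_iff.1 hrK) (-1)
  have hsum := T.sum_bilinear_eq hr ((LinearMap.mul K K).compl₁₂ φ φ)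
  simp only [LinearMap.compl₁₂_apply, LinearMap.mul_apply', hφ1, hφr, one_mul] at hsum
  have hterm k : 0 ≤ φ (T.w k) * φ (T.h k) := by
    have hh : T.h k = (⟨_, hK k⟩ : K) • T.w k := (div_mul_cancel₀ _ (T.w_pos k).ne').symm
    rw [hh, map_smul, smul_eq_mul, mul_left_comm]
    exact mul_nonneg (div_nonneg (T.h_pos k).le (T.w_pos k).le) (mul_self_nonneg _)
  have := hsum ▸ sum_nonneg fun k _ => hterm k
  exact absurd this (by norm_num)

end RectTiling

section SqrtSubfield

variable {p : ℚ}

theorem Irrational.sqrt_ratCast_mul_self (hp : Irrational (Real.sqrt p)) :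
    Real.sqrt p * Real.sqrt p = p :=
  Real.mul_self_sqrt (Rat.cast_nonneg.2 (irrational_sqrt_ratCast_iff.1 hp).2)

theorem Irrational.eq_of_add_mul_sqrt_eq (hp : Irrational (Real.sqrt p)) {a b c d : ℚ}
    (h : (a : ℝ) + b * Real.sqrt p = c + d * Real.sqrt p) : a = c ∧ b = d := by
  by_cases hbd : b = d
  · subst hbd
    exact ⟨by exact_mod_cast add_right_cancel h, rfl⟩
  · refine absurd ⟨(c - a) / (b - d), ?_⟩ hp
    have : (b : ℝ) - d ≠ 0 := sub_ne_zero.2 (by exact_mod_cast hbd)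
    push_cast
    field_simp
    linarith

theorem Irrational.eq_zero_of_sq_sub_mul_sq_eq_zero (hp : Irrational (Real.sqrt p)) {a b : ℚ}
    (h : a ^ 2 - p * b ^ 2 = 0) : a = 0 ∧ b = 0 := by
  have hb : b = 0 := by
    by_contra hb
    refine (irrational_sqrt_ratCast_iff.1 hp).1 ⟨a / b, ?_⟩
    field_simp
    linarith
  subst hb
  exact ⟨by simpa using h, rfl⟩

theorem pos_and_mul_sq_lt_sq (hp : 0 ≤ p) {a b : ℚ} (h₁ : 0 < (a : ℝ) + b * Real.sqrt p)
    (h₂ : 0 < (a : ℝ) - b * Real.sqrt p) : 0 < a ∧ p * b ^ 2 < a ^ 2 := by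
  have hsq : Real.sqrt p * Real.sqrt p = p := Real.mul_self_sqrt (Rat.cast_nonneg.2 hp)
  have hnorm : ((a : ℝ) + b * Real.sqrt p) * (a - b * Real.sqrt p) = a ^ 2 - p * b ^ 2 := by
    linear_combination (-(b : ℝ) ^ 2) * hsq
  constructor
  · exact_mod_cast (show (0 : ℝ) < a by linarith)
  · have := hnorm ▸ mul_pos h₁ h₂
    exact_mod_cast (show (p : ℝ) * b ^ 2 < a ^ 2 by linarith)

theorem abs_div_ne_abs_div (hp : Irrational (Real.sqrt p)) {a b c d : ℚ} (ha : 0 < a)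
    (hc : 0 < c)
    (h : Irrational ((a + b * Real.sqrt p) / (c + d * Real.sqrt p)) ∧
      Irrational ((a + b * Real.sqrt p) * (c + d * Real.sqrt p))) :
    |b| / a ≠ |d| / c := by
  intro heq
  rw [div_eq_div_iff ha.ne' hc.ne'] at heq
  have : |b * c| = |d * a| := by rw [abs_mul, abs_mul, abs_of_pos hc, abs_of_pos ha, heq]
  rcases abs_eq_abs.1 this with hbd | hbd
  · have hcd : (c : ℝ) + d * Real.sqrt p ≠ 0 := fun h0 =>
      hc.ne' (hp.eq_of_add_mul_sqrt_eq (c := 0) (d := 0) (by simpa using h0)).1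
    refine h.1 ⟨a / c, ?_⟩
    rw [eq_div_iff hcd]
    push_cast
    field_simp
    linear_combination (-Real.sqrt p) * (by exact_mod_cast hbd : (b : ℝ) * c = d * a)
  · refine h.2 ⟨a * c + p * b * d, ?_⟩
    push_cast
    linear_combination (-(b * d) : ℝ) * hp.sqrt_ratCast_mul_self -
      Real.sqrt p * (by exact_mod_cast hbd : (b : ℝ) * c = -(d * a))

noncomputable def sqrtSubfield (hp : Irrational (Real.sqrt p)) : Subfield ℝ where
  carrier := {x | ∃ a b : ℚ, x = a + b * Real.sqrt p}
  mul_mem' := by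
    rintro _ _ ⟨a, b, rfl⟩ ⟨c, d, rfl⟩
    refine ⟨a * c + p * b * d, a * d + b * c, ?_⟩
    push_cast
    linear_combination (b * d : ℝ) * hp.sqrt_ratCast_mul_self
  one_mem' := ⟨1, 0, by simp⟩
  add_mem' := by
    rintro _ _ ⟨a, b, rfl⟩ ⟨c, d, rfl⟩
    exact ⟨a + c, b + d, by push_cast; ring⟩
  zero_mem' := ⟨0, 0, by simp⟩
  neg_mem' := by
    rintro _ ⟨a, b, rfl⟩
    exact ⟨-a, -b, by push_cast; ring⟩
  inv_mem' := by
    rintro _ ⟨a, b, rfl⟩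
    refine ⟨a / (a ^ 2 - p * b ^ 2), -b / (a ^ 2 - p * b ^ 2), ?_⟩
    by_cases hn : a ^ 2 - p * b ^ 2 = 0
    · obtain ⟨rfl, rfl⟩ := hp.eq_zero_of_sq_sub_mul_sq_eq_zero hn
      simp
    · have hn' : (a : ℝ) ^ 2 - p * b ^ 2 ≠ 0 := by exact_mod_cast hn
      refine inv_eq_of_mul_eq_one_right ?_
      calc _ = ((a : ℝ) ^ 2 - p * b ^ 2) / ((a : ℝ) ^ 2 - p * b ^ 2) := by
            push_cast
            linear_combination (-(b : ℝ) ^ 2 / ((a : ℝ) ^ 2 - p * b ^ 2)) *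
              hp.sqrt_ratCast_mul_self
        _ = 1 := div_self hn'

namespace sqrtSubfield

variable (hp : Irrational (Real.sqrt p))

theorem mem_iff {x : ℝ} : x ∈ sqrtSubfield hp ↔ ∃ a b : ℚ, x = a + b * Real.sqrt p := Iff.rfl

noncomputable def ofCoords : ℚ × ℚ →ₗ[ℚ] sqrtSubfield hp where
  toFun v := ⟨v.1 + v.2 * Real.sqrt p, v.1, v.2, rfl⟩
  map_add' v w := by ext; simp only [Prod.fst_add, Prod.snd_add]; push_cast; ring
  map_smul' c v := by ext; simp [Rat.smul_def]; ring

noncomputable def coords : sqrtSubfield hp ≃ₗ[ℚ] ℚ × ℚ :=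
  (LinearEquiv.ofBijective (ofCoords hp)
    ⟨fun _ _ h => Prod.ext_iff.2 (hp.eq_of_add_mul_sqrt_eq (congrArg Subtype.val h)),
      fun ⟨_, a, b, hx⟩ => ⟨(a, b), Subtype.ext hx.symm⟩⟩).symm

theorem coords_eq_iff {x : sqrtSubfield hp} {a b : ℚ} :
    coords hp x = (a, b) ↔ (x : ℝ) = a + b * Real.sqrt p := by
  rw [coords, LinearEquiv.symm_apply_eq, Subtype.ext_iff]
  rfl

theorem coe_eq_coords (x : sqrtSubfield hp) :
    (x : ℝ) = (coords hp x).1 + (coords hp x).2 * Real.sqrt p :=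
  (coords_eq_iff hp).1 rfl

theorem coords_mul (x y : sqrtSubfield hp) :
    coords hp (x * y) = ((coords hp x).1 * (coords hp y).1 + p * (coords hp x).2 * (coords hp y).2,
      (coords hp x).1 * (coords hp y).2 + (coords hp x).2 * (coords hp y).1) := by
  rw [coords_eq_iff, Subfield.coe_mul, coe_eq_coords hp x, coe_eq_coords hp y]
  push_cast
  linear_combination ((coords hp x).2 * (coords hp y).2 : ℝ) * hp.sqrt_ratCast_mul_self

theorem exists_linearMap_mul_eq (hp : Irrational (Real.sqrt p)) {u₀ : ℝ} (hu₀ : u₀ ≠ 0) :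
    ∃ G : ℝ →ₗ[ℚ] ℚ × ℚ, G 1 = (1, 0) ∧ G u₀ ≠ 0 ∧ ∀ (a b : ℚ) (u : ℝ),
      G ((a + b * Real.sqrt p) * u) =
        (a * (G u).1 + p * b * (G u).2, a * (G u).2 + b * (G u).1) := by
  obtain ⟨φ, hφ1, hφu₀⟩ :=
    Module.exists_dual_eq_one_and_ne_zero (K := sqrtSubfield hp) one_ne_zero hu₀
  refine ⟨(coords hp).toLinearMap ∘ₗ φ.restrictScalars ℚ, ?_, ?_, fun a b u => ?_⟩
  · change coords hp (φ 1) = _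
    rw [hφ1, coords_eq_iff]
    simp
  · exact (coords hp).map_ne_zero_iff.2 hφu₀
  · change coords hp (φ ((⟨_, a, b, rfl⟩ : sqrtSubfield hp) • u)) = _
    rw [map_smul, smul_eq_mul, coords_mul, (coords_eq_iff hp).2 rfl]
    rfl

end sqrtSubfield

end SqrtSubfield

section TwistedForm

variable {p μ : ℚ}

def twistedForm (p μ : ℚ) : ℚ × ℚ →ₗ[ℚ] ℚ × ℚ →ₗ[ℚ] ℚ :=
  LinearMap.mk₂ ℚ
    (fun v w => v.1 * w.1 + μ * (v.1 * w.2 + v.2 * w.1) + (2 * μ ^ 2 - p) * v.2 * w.2)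
    (fun _ _ _ => by simp only [Prod.fst_add, Prod.snd_add]; ring)
    (fun _ _ _ => by simp only [Prod.smul_fst, Prod.smul_snd, smul_eq_mul]; ring)
    (fun _ _ _ => by simp only [Prod.fst_add, Prod.snd_add]; ring)
    (fun _ _ _ => by simp only [Prod.smul_fst, Prod.smul_snd, smul_eq_mul]; ring)

theorem twistedForm_apply (v w : ℚ × ℚ) : twistedForm p μ v w =
    v.1 * w.1 + μ * (v.1 * w.2 + v.2 * w.1) + (2 * μ ^ 2 - p) * v.2 * w.2 := rfl

theorem twistedForm_comm (v w : ℚ × ℚ) : twistedForm p μ v w = twistedForm p μ w v := by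
  simp only [twistedForm_apply]; ring

/-- The second argument is `(a + b√p) * (v.1 + v.2√p)` in the coordinates of `ℚ(√p)`. -/
theorem twistedForm_apply_mul (a b : ℚ) (v : ℚ × ℚ) :
    twistedForm p μ v (a * v.1 + p * b * v.2, a * v.2 + b * v.1) =
      (a + μ * b) * (v.1 + μ * v.2) ^ 2 + (μ ^ 2 - p) * (a - μ * b) * v.2 ^ 2 := by
  simp only [twistedForm_apply]; ring

theorem twistedForm_apply_mul_nonneg (hμ : p ≤ μ ^ 2) {a b : ℚ} (hab : |μ * b| ≤ a)
    (v : ℚ × ℚ) : 0 ≤ twistedForm p μ v (a * v.1 + p * b * v.2, a * v.2 + b * v.1) := by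
  obtain ⟨h₁, h₂⟩ := abs_le.1 hab
  rw [twistedForm_apply_mul]
  have : 0 ≤ a + μ * b := by linarith
  have : 0 ≤ (μ ^ 2 - p) * (a - μ * b) := mul_nonneg (by linarith) (by linarith)
  positivity

theorem twistedForm_apply_mul_pos (hμ : p < μ ^ 2) {a b : ℚ} (hab : |μ * b| < a)
    {v : ℚ × ℚ} (hv : v ≠ 0) :
    0 < twistedForm p μ v (a * v.1 + p * b * v.2, a * v.2 + b * v.1) := by
  obtain ⟨h₁, h₂⟩ := abs_lt.1 hab
  rw [twistedForm_apply_mul]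
  have h₃ : 0 < a + μ * b := by linarith
  have h₄ : 0 < (μ ^ 2 - p) * (a - μ * b) := mul_pos (by linarith) (by linarith)
  by_cases hv₂ : v.2 = 0
  · have hv₁ : v.1 ≠ 0 := fun hv₁ => hv (Prod.ext hv₁ hv₂)
    simp only [hv₂, mul_zero, add_zero, ne_eq, OfNat.ofNat_ne_zero, not_false_eq_true,
      zero_pow]
    positivity
  · positivity

end TwistedForm

namespace RectTiling

variable {r : ℝ} (T : RectTiling r)

theorem add_mul_pos {p : ℚ} (hp : Irrational (Real.sqrt p)) (hr : 0 ≤ r) {e f μ : ℚ}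
    (hre : r = e + f * Real.sqrt p) (hμ : p < μ ^ 2)
    (hT : ∀ k, ∃ a b : ℚ, T.ratioOK k (a + b * Real.sqrt p) ∧ |μ * b| ≤ a)
    (hT' : ∃ k, ∃ a b : ℚ, T.ratioOK k (a + b * Real.sqrt p) ∧ |μ * b| < a) :
    0 < e + μ * f := by
  obtain ⟨k₀, a₀, b₀, hk₀, hab₀⟩ := hT'
  obtain ⟨u₀, hu₀, hk₀u₀⟩ := hk₀.exists_apply_eq (α := ℚ)
  obtain ⟨G, hG1, hGu₀, hGmul⟩ := sqrtSubfield.exists_linearMap_mul_eq hp hu₀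
  have hGr : G r = (e, f) := by
    simpa [hG1, ← hre] using hGmul e f 1
  have hsymm s t : twistedForm p μ (G s) (G t) = twistedForm p μ (G t) (G s) :=
    twistedForm_comm _ _
  have hsum : e + μ * f = ∑ k, twistedForm p μ (G (T.w k)) (G (T.h k)) := by
    calc e + μ * f = twistedForm p μ (G 1) (G r) := by rw [hG1, hGr, twistedForm_apply]; ring
      _ = _ := (T.sum_bilinear_eq hr ((twistedForm p μ).compl₁₂ G G)).symm
  rw [hsum]
  refine sum_pos' (fun k _ => ?_) ⟨k₀, mem_univ _, ?_⟩
  · obtain ⟨a, b, hk, hab⟩ := hT k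
    obtain ⟨u, -, hku⟩ := hk.exists_apply_eq (α := ℚ)
    rw [hku _ hsymm, hGmul]
    exact twistedForm_apply_mul_nonneg hμ.le hab _
  · rw [hk₀u₀ _ hsymm, hGmul]
    exact twistedForm_apply_mul_pos hμ hab₀ hGu₀

theorem pos_and_abs_lt_mul {p : ℚ} (hp : Irrational (Real.sqrt p)) (hr : 0 ≤ r) {e f M : ℚ}
    (hre : r = e + f * Real.sqrt p) (hM : 0 < M) (hpM : p * M ^ 2 < 1)
    (hT : ∀ k, ∃ a b : ℚ, T.ratioOK k (a + b * Real.sqrt p) ∧ |b| ≤ M * a)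
    (hT' : ∃ k, ∃ a b : ℚ, T.ratioOK k (a + b * Real.sqrt p) ∧ |b| < M * a) :
    0 < e ∧ |f| < M * e := by
  have key (μ : ℚ) (hμ : |μ| = M⁻¹) : 0 < e + μ * f := by
    have hμb (b : ℚ) : |μ * b| = |b| / M := by rw [abs_mul, hμ, inv_mul_eq_div]
    refine T.add_mul_pos hp hr hre ?_ (fun k => ?_) ?_
    · rwa [← sq_abs, hμ, inv_pow, ← one_div, lt_div_iff₀ (by positivity)]
    · obtain ⟨a, b, hk, hab⟩ := hT k
      exact ⟨a, b, hk, by rwa [hμb, div_le_iff₀' hM]⟩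
    · obtain ⟨k, a, b, hk, hab⟩ := hT'
      exact ⟨k, a, b, hk, by rwa [hμb, div_lt_iff₀' hM]⟩
  have hplus := key M⁻¹ (abs_of_pos (inv_pos.2 hM))
  have hminus := key (-M⁻¹) (by rw [abs_neg, abs_of_pos (inv_pos.2 hM)])
  refine ⟨by linarith, ?_⟩
  have : |M⁻¹ * f| < e := abs_lt.2 ⟨by linarith, by linarith⟩
  rwa [abs_mul, abs_of_pos (inv_pos.2 hM), inv_mul_eq_div, div_lt_iff₀' hM] at this

end RectTiling

theorem diverse_tiling_pos_conj_necessary (p : ℚ) (hp : 0 < p)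
    (hirr : Irrational (Real.sqrt p))
    (n : ℕ) (hn : 2 ≤ n) (a b : Fin n → ℚ) (X : Fin n → ℝ)
    (hX : ∀ i, X i = (a i : ℝ) + (b i : ℝ) * Real.sqrt p)
    (hXpos : ∀ i, 0 < X i)
    (hdist : ∀ i j, i ≠ j → Irrational (X i / X j) ∧ Irrational (X i * X j))
    (hconj : ∀ i, 0 < (a i : ℝ) - (b i : ℝ) * Real.sqrt p)
    (z : ℝ) (hz : 0 < z) (htile : DiverselyTileable z X) :
    ∃ e f : ℚ, z = (e : ℝ) + (f : ℝ) * Real.sqrt p ∧ 0 < e ∧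
      |f| / e < Finset.univ.sup' ⟨⟨0, by omega⟩, Finset.mem_univ _⟩
        (fun i => |b i| / a i) := by
  obtain ⟨T, hT, hTX⟩ := htile
  have hab i := pos_and_mul_sq_lt_sq hp.le (hX i ▸ hXpos i) (hconj i)
  obtain ⟨e, f, hze⟩ := (sqrtSubfield.mem_iff hirr).1 <| T.mem_of_div_mem hz.le _ fun k =>
    have ⟨i, hi⟩ := hT k
    hi.div_mem ((sqrtSubfield.mem_iff hirr).2 ⟨a i, b i, hX i⟩)
  obtain ⟨i₀, hi₀, hlt⟩ := exists_sup'_eq_and_lt ⟨⟨0, by omega⟩, mem_univ _⟩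
    (fun i => |b i| / a i) fun i j hij => by
      by_contra hne
      exact abs_div_ne_abs_div hirr (hab i).1 (hab j).1 (hX i ▸ hX j ▸ hdist i j hne) hij
  set M := Finset.univ.sup' ⟨⟨0, by omega⟩, Finset.mem_univ _⟩ fun i => |b i| / a i
  have := Fin.nontrivial_iff_two_le.2 hn
  obtain ⟨j, hj⟩ := exists_ne i₀
  have hM : 0 < M := (div_nonneg (abs_nonneg _) (hab j).1.le).trans_lt (hlt j (mem_univ j) hj)
  have hpM : p * M ^ 2 < 1 := by
    rw [hi₀, div_pow, sq_abs, mul_div_assoc', div_lt_one (pow_pos (hab i₀).1 2)]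
    exact (hab i₀).2
  obtain ⟨k, hk⟩ := hTX j
  obtain ⟨he, hf⟩ := T.pos_and_abs_lt_mul hirr hz.le hze hM hpM
    (fun k => have ⟨i, hi⟩ := hT k
      ⟨a i, b i, hX i ▸ hi,
        (div_le_iff₀ (hab i).1).1 (le_sup' (fun i => |b i| / a i) (mem_univ i))⟩)
    ⟨k, a j, b j, hX j ▸ hk, (div_lt_iff₀ (hab j).1).1 (hlt j (mem_univ j) hj)⟩
  exact ⟨e, f, hze, he, (div_lt_iff₀ he).2 hf⟩
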